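/- Let T > 0, Δ ∈ ℝ, a₁ > 0, a₂ ∈ ℝ, c₁ > 0, c₂ ∈ ℝ, and define H(t,S,q) = q(S − Δ/2 − a₂) − (c₂/2)q² − 4(c₁q + a₁)³ / (9c₁²(T−t)). For every (t,S,q) with 0 ≤ t < T and q > 0, the supremum over ν ≥ 0 of the map ν ↦ −(c₁ν² + c₂ν) ∂_S H(t,S,q) − ν ∂_q H(t,S,q) + (S − Δ/2 − a₁ν − a₂)ν is attained uniquely at ν* = 2(c₁q + a₁) / (3c₁(T−t)). -/

import Mathlib

/-- Value function for the optimal liquidation problem with linear temporary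
price impact `f(ν) = a₁ν + a₂` and quadratic permanent price impact
`g(ν) = c₁ν² + c₂ν`. -/
noncomputable def Hquad (T Δ a₁ a₂ c₁ c₂ : ℝ) (t S q : ℝ) : ℝ :=
  q * (S - Δ / 2 - a₂) - c₂ / 2 * q ^ 2 - 4 * (c₁ * q + a₁) ^ 3 / (9 * c₁ ^ 2 * (T - t))

/-- The Hamiltonian `ν ↦ −(c₁ν² + c₂ν) ∂_S H − ν ∂_q H + (S − Δ/2 − a₁ν − a₂)ν`
appearing in the HJB equation, evaluated with the partial derivatives of `Hquad`. -/
noncomputable def HamQuad (T Δ a₁ a₂ c₁ c₂ : ℝ) (t S q ν : ℝ) : ℝ :=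
  -(c₁ * ν ^ 2 + c₂ * ν) * deriv (fun s => Hquad T Δ a₁ a₂ c₁ c₂ t s q) S
    - ν * deriv (fun p => Hquad T Δ a₁ a₂ c₁ c₂ t S p) q
    + (S - Δ / 2 - a₁ * ν - a₂) * ν

/-
With `A = c₁q + a₁`, the partial derivatives `∂_S H = q` and
`∂_q H = S − Δ/2 − a₂ − c₂q − 4A²/(3c₁(T−t))` make the terms in `S`, `Δ`, `a₂` and `c₂`
cancel from the Hamiltonian, leaving the concave parabola
`ν ↦ A(2ν*ν − ν²) = A ν*² − A(ν − ν*)²`, whose unique maximiser is `ν*` since `A > 0`.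
-/

section

variable (T Δ a₁ a₂ c₁ c₂ t S q : ℝ)

theorem hasDerivAt_Hquad_midprice :
    HasDerivAt (fun s => Hquad T Δ a₁ a₂ c₁ c₂ t s q) q S := by
  unfold Hquad
  simpa using ((((hasDerivAt_id S).sub_const (Δ / 2)).sub_const a₂).const_mul q).sub_const
    (c₂ / 2 * q ^ 2) |>.sub_const (4 * (c₁ * q + a₁) ^ 3 / (9 * c₁ ^ 2 * (T - t)))

theorem hasDerivAt_Hquad_inventory :
    HasDerivAt (fun p => Hquad T Δ a₁ a₂ c₁ c₂ t S p)
      ((S - Δ / 2 - a₂) - c₂ * q - 4 * c₁ * (c₁ * q + a₁) ^ 2 / (3 * c₁ ^ 2 * (T - t))) q := by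
  have hlin : HasDerivAt (fun p : ℝ => p * (S - Δ / 2 - a₂)) (S - Δ / 2 - a₂) q := by
    simpa using (hasDerivAt_id q).mul_const (S - Δ / 2 - a₂)
  have hsq : HasDerivAt (fun p : ℝ => c₂ / 2 * p ^ 2) (c₂ / 2 * (2 * q)) q := by
    simpa using (hasDerivAt_pow 2 q).const_mul (c₂ / 2)
  have hcube : HasDerivAt (fun p : ℝ => 4 * (c₁ * p + a₁) ^ 3 / (9 * c₁ ^ 2 * (T - t)))
      (4 * (3 * (c₁ * q + a₁) ^ 2 * c₁) / (9 * c₁ ^ 2 * (T - t))) q := by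
    have hA : HasDerivAt (fun p : ℝ => c₁ * p + a₁) c₁ q := by
      simpa using ((hasDerivAt_id q).const_mul c₁).add_const a₁
    simpa using ((hA.pow 3).const_mul (4 : ℝ)).div_const (9 * c₁ ^ 2 * (T - t))
  unfold Hquad
  refine ((hlin.fun_sub hsq).fun_sub hcube).congr_deriv ?_
  rw [← mul_div_mul_left (4 * c₁ * (c₁ * q + a₁) ^ 2) _ three_ne_zero]
  ring

theorem HamQuad_eq (ν : ℝ) (hc₁ : c₁ ≠ 0) (htT : T - t ≠ 0) :
    HamQuad T Δ a₁ a₂ c₁ c₂ t S q ν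
      = (c₁ * q + a₁) * (4 * (c₁ * q + a₁) / (3 * c₁ * (T - t)) * ν - ν ^ 2) := by
  rw [HamQuad, (hasDerivAt_Hquad_midprice ..).deriv, (hasDerivAt_Hquad_inventory ..).deriv]
  field_simp
  ring

theorem HamQuad_eq_sub_mul_sq (ν : ℝ) (hc₁ : c₁ ≠ 0) (htT : T - t ≠ 0) :
    HamQuad T Δ a₁ a₂ c₁ c₂ t S q ν
      = HamQuad T Δ a₁ a₂ c₁ c₂ t S q (2 * (c₁ * q + a₁) / (3 * c₁ * (T - t)))
        - (c₁ * q + a₁) * (ν - 2 * (c₁ * q + a₁) / (3 * c₁ * (T - t))) ^ 2 := by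
  rw [HamQuad_eq (hc₁ := hc₁) (htT := htT), HamQuad_eq (hc₁ := hc₁) (htT := htT)]
  ring

end

theorem stmt_3_general (T Δ a₁ a₂ c₁ c₂ : ℝ) (ha₁ : 0 < a₁) (hc₁ : 0 < c₁)
    (t S q : ℝ) (htT : t < T) (hq : 0 < q) :
    0 ≤ 2 * (c₁ * q + a₁) / (3 * c₁ * (T - t))
    ∧ (∀ ν : ℝ, 0 ≤ ν → HamQuad T Δ a₁ a₂ c₁ c₂ t S q ν
        ≤ HamQuad T Δ a₁ a₂ c₁ c₂ t S q (2 * (c₁ * q + a₁) / (3 * c₁ * (T - t))))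
    ∧ (∀ ν : ℝ, 0 ≤ ν →
        HamQuad T Δ a₁ a₂ c₁ c₂ t S q ν
          = HamQuad T Δ a₁ a₂ c₁ c₂ t S q (2 * (c₁ * q + a₁) / (3 * c₁ * (T - t))) →
        ν = 2 * (c₁ * q + a₁) / (3 * c₁ * (T - t))) := by
  have hTt : 0 < T - t := sub_pos.mpr htT
  have hA : 0 < c₁ * q + a₁ := by positivity
  have hH := fun ν => HamQuad_eq_sub_mul_sq T Δ a₁ a₂ c₁ c₂ t S q ν hc₁.ne' hTt.ne'
  refine ⟨by positivity, fun ν _ => ?_, fun ν _ heq => ?_⟩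
  · rw [hH ν]
    exact sub_le_self _ (by positivity)
  · rw [hH ν, sub_eq_self, mul_eq_zero, pow_eq_zero_iff two_ne_zero, sub_eq_zero] at heq
    exact heq.resolve_left hA.ne'

/-- With linear TPI and quadratic PPI, the supremum over `ν ≥ 0` of the Hamiltonian
is attained uniquely at `ν* = 2(c₁q + a₁)/(3c₁(T−t))` whenever `0 ≤ t < T` and `q > 0`. -/
theorem stmt_3 (T Δ a₁ a₂ c₁ c₂ : ℝ) (hT : 0 < T) (ha₁ : 0 < a₁) (hc₁ : 0 < c₁)
    (t S q : ℝ) (ht0 : 0 ≤ t) (htT : t < T) (hq : 0 < q) :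
    0 ≤ 2 * (c₁ * q + a₁) / (3 * c₁ * (T - t))
    ∧ (∀ ν : ℝ, 0 ≤ ν → HamQuad T Δ a₁ a₂ c₁ c₂ t S q ν
        ≤ HamQuad T Δ a₁ a₂ c₁ c₂ t S q (2 * (c₁ * q + a₁) / (3 * c₁ * (T - t))))
    ∧ (∀ ν : ℝ, 0 ≤ ν →
        HamQuad T Δ a₁ a₂ c₁ c₂ t S q ν
          = HamQuad T Δ a₁ a₂ c₁ c₂ t S q (2 * (c₁ * q + a₁) / (3 * c₁ * (T - t))) →
        ν = 2 * (c₁ * q + a₁) / (3 * c₁ * (T - t))) :=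
  stmt_3_general T Δ a₁ a₂ c₁ c₂ ha₁ hc₁ t S q htT hq
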